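/- In a probability-theoretic model: let R be uniform on Fin 101 (values 0 to 100), and conditional on R = r draw an ordered pair of distinct balls from 100 balls of which r are red, uniformly. Then the conditional probability that the second ball is red given the first ball is red equals 2/3. -/

import Mathlib

/-!
Conditionally on `r` red balls, there are `r (n - 1)` draws whose first ball is red and
`r (r - 1)` whose two balls are red. Summing over `r = 0, …, n` gives `(n + 1) n (n - 1) / 2`
and `(n + 1) n (n - 1) / 3`, whose ratio is `2 / 3` as soon as `n ≥ 2`.
-/

open Finset ProbabilityTheory MeasureTheory

lemma cond_uniformOfFintype_apply {α : Type*} [Fintype α] [Nonempty α] [MeasurableSpace α]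
    [MeasurableSingletonClass α] (s t : Set α) :
    (PMF.uniformOfFintype α).toMeasure[t|s] = Nat.card ↥(s ∩ t) / Nat.card s := by
  classical
  have hα : (Fintype.card α : ENNReal) ≠ 0 := by simp
  rw [cond_apply s.toFinite.measurableSet,
    PMF.toMeasure_uniformOfFintype_apply s s.toFinite.measurableSet,
    PMF.toMeasure_uniformOfFintype_apply _ (s ∩ t).toFinite.measurableSet,
    ENNReal.inv_div (by simp) (Or.inl hα), mul_comm, ← mul_div_assoc,
    ENNReal.div_mul_cancel hα (by simp), Nat.card_eq_fintype_card, Nat.card_eq_fintype_card]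

lemma card_filter_prod_eq_sum {β γ : Type*} [Fintype β] [Fintype γ] (P : β × γ → Prop)
    [DecidablePred P] : #{x | P x} = ∑ b, #{c | P (b, c)} := by
  simp only [card_filter]
  exact Fintype.sum_prod_type _

lemma card_filter_ne_and_fst {α : Type*} [Fintype α] [DecidableEq α] (red : α → Prop)
    [DecidablePred red] :
    #{p : α × α | p.1 ≠ p.2 ∧ red p.1} = #{a | red a} * (Fintype.card α - 1) := by
  rw [card_filter_prod_eq_sum, ← smul_eq_mul, ← sum_const, sum_filter]
  refine sum_congr rfl fun a _ => ?_
  by_cases h : red a <;> simp [h, filter_ne]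

lemma card_filter_ne_and_fst_and_snd {α : Type*} [Fintype α] [DecidableEq α] (red : α → Prop)
    [DecidablePred red] :
    #{p : α × α | p.1 ≠ p.2 ∧ red p.1 ∧ red p.2} = #{a | red a} * (#{a | red a} - 1) := by
  rw [Nat.mul_sub_one, ← offDiag_card]
  congr 1
  ext p
  simp only [mem_filter, mem_univ, true_and, mem_offDiag]
  tauto

lemma sum_range_mul_pred_mul_three (n : ℕ) :
    (∑ r ∈ range (n + 1), r * (r - 1)) * 3 = (n + 1) * n * (n - 1) := by
  induction n with
  | zero => simp
  | succ n ih =>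
    rw [sum_range_succ, add_mul, ih]
    cases n
    · simp
    · simp only [Nat.add_sub_cancel]; ring

lemma Nat.card_setOf_subtype_val {β : Type*} [Fintype β] (Q P : β → Prop) [DecidablePred Q]
    [DecidablePred P] : Nat.card {x : {y // Q y} | P x.val} = #{y | Q y ∧ P y} := by
  rw [← Fintype.card_subtype, ← Nat.card_eq_fintype_card]
  exact Nat.card_congr (Equiv.subtypeSubtypeEquivSubtypeInter Q P)

/-- `(r, i, j)`: the balls of index `< r` are red, and `(i, j)` is the ordered draw. -/
abbrev DrawSpace (n : ℕ) := {x : Fin (n + 1) × Fin n × Fin n // x.2.1 ≠ x.2.2}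

def firstRed (n : ℕ) : Set (DrawSpace n) := {x | (x.val.2.1 : ℕ) < x.val.1}

def secondRed (n : ℕ) : Set (DrawSpace n) := {x | (x.val.2.2 : ℕ) < x.val.1}

lemma card_filter_fin_val_lt (n : ℕ) (r : Fin (n + 1)) : #{i : Fin n | (i : ℕ) < r} = r := by
  rw [Fin.card_filter_val_lt, min_eq_right (Fin.is_le r)]

lemma card_firstRed_mul_two (n : ℕ) : Nat.card (firstRed n) * 2 = (n + 1) * n * (n - 1) := by
  rw [firstRed, Nat.card_setOf_subtype_val (fun y : Fin (n + 1) × Fin n × Fin n => y.2.1 ≠ y.2.2)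
    (fun y => (y.2.1 : ℕ) < y.1), card_filter_prod_eq_sum]
  have fiber (r : Fin (n + 1)) :
      #{p : Fin n × Fin n | p.1 ≠ p.2 ∧ (p.1 : ℕ) < r} = r * (n - 1) := by
    rw [card_filter_ne_and_fst (fun i : Fin n => (i : ℕ) < r), card_filter_fin_val_lt,
      Fintype.card_fin]
  simp only [fiber]
  rw [← sum_mul, Fin.sum_univ_eq_sum_range (fun r => r), mul_right_comm, sum_range_id_mul_two,
    Nat.add_sub_cancel]

lemma card_firstRed_inter_secondRed_mul_three (n : ℕ) :
    Nat.card ↥(firstRed n ∩ secondRed n) * 3 = (n + 1) * n * (n - 1) := by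
  rw [firstRed, secondRed, ← Set.ofPred_and,
    Nat.card_setOf_subtype_val (fun y : Fin (n + 1) × Fin n × Fin n => y.2.1 ≠ y.2.2)
      (fun y => (y.2.1 : ℕ) < y.1 ∧ (y.2.2 : ℕ) < y.1), card_filter_prod_eq_sum]
  have fiber (r : Fin (n + 1)) :
      #{p : Fin n × Fin n | p.1 ≠ p.2 ∧ (p.1 : ℕ) < r ∧ (p.2 : ℕ) < r} = r * (r - 1) := by
    rw [card_filter_ne_and_fst_and_snd (fun i : Fin n => (i : ℕ) < r), card_filter_fin_val_lt]
  simp only [fiber]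
  rw [Fin.sum_univ_eq_sum_range (fun r => r * (r - 1)), sum_range_mul_pred_mul_three]

theorem cond_secondRed_firstRed (n : ℕ) [Nonempty (DrawSpace n)] :
    (PMF.uniformOfFintype (DrawSpace n)).toMeasure[secondRed n | firstRed n] = 2 / 3 := by
  obtain ⟨⟨⟨_, i, j⟩, hij⟩⟩ := ‹Nonempty (DrawSpace n)›
  have hn : 2 ≤ n := by
    have := Fin.val_ne_of_ne hij
    omega
  have hA := card_firstRed_mul_two n
  have hAB := card_firstRed_inter_secondRed_mul_three n
  have hA_ne : Nat.card (firstRed n) ≠ 0 := by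
    have : 0 < (n + 1) * n * (n - 1) := Nat.mul_pos (Nat.mul_pos n.succ_pos (by omega)) (by omega)
    omega
  rw [cond_uniformOfFintype_apply, ENNReal.div_eq_div_iff (by norm_num) (by norm_num)
    (by exact_mod_cast hA_ne) (by simp)]
  exact_mod_cast (mul_comm _ _).trans (hAB.trans hA.symm)

theorem stmt6 :
    haveI : Nonempty {x : Fin 101 × Fin 100 × Fin 100 // x.2.1 ≠ x.2.2} :=
      ⟨⟨(0, 0, 1), by decide⟩⟩
    ((PMF.uniformOfFintype {x : Fin 101 × Fin 100 × Fin 100 // x.2.1 ≠ x.2.2}).toMeasure)[{x : {x : Fin 101 × Fin 100 × Fin 100 // x.2.1 ≠ x.2.2} | (x.val.2.2 : ℕ) < x.val.1}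
        | {x : {x : Fin 101 × Fin 100 × Fin 100 // x.2.1 ≠ x.2.2} | (x.val.2.1 : ℕ) < x.val.1}]
      = 2 / 3 :=
  @cond_secondRed_firstRed 100 ⟨⟨(0, 0, 1), by decide⟩⟩
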